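/- arXiv:1509.07343 — 2 statements merged into one kernel-verified Lean document; each statement's English description precedes it below -/
import Mathlib

section
/- Let h > 0, let c̄ be an even strictly convex function, and let f be a continuous function with t̄_1(f) = 0. Let V ≥ t_1(f) and let Ψ be the unique minimizer of ∫_0^V c̄(φ'(u)) du over absolutely continuous φ on [0,V] with ‖f − φ‖_{∞,[0,V]} ≤ h/2. Then Ψ(0) = f(0) + h/2. -/
open MeasureTheory Set Filter

noncomputable section

/-- `φ` is absolutely continuous on `[a, b]` with a.e. derivative `g`. -/
def IsACDeriv (a b : ℝ) (φ g : ℝ → ℝ) : Prop :=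
  MeasureTheory.IntegrableOn g (Set.Icc a b) ∧
    ∀ x ∈ Set.Icc a b, φ x = φ a + ∫ t in a..x, g t

/-- `φ` stays within distance `h/2` of `w` on `[a, b]`. -/
def InTube (a b h : ℝ) (w φ : ℝ → ℝ) : Prop :=
  ∀ x ∈ Set.Icc a b, |w x - φ x| ≤ h / 2

/-- Admissible function (with derivative `g`) for the free-boundary problem. -/
def AdmissibleFree (a b h : ℝ) (w φ g : ℝ → ℝ) : Prop :=
  IsACDeriv a b φ g ∧ InTube a b h w φ

/-- Admissible function for the problem with boundary conditions `φ a = c`, `φ b = d`. -/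
def AdmissibleBC (a b h c d : ℝ) (w φ g : ℝ → ℝ) : Prop :=
  AdmissibleFree a b h w φ g ∧ φ a = c ∧ φ b = d

/-- The `C`-energy of a function with derivative `g` on `[a, b]`. -/
def energy (a b : ℝ) (C g : ℝ → ℝ) : ℝ := ∫ u in a..b, C (g u)

/-- `(φ, g)` is the unique minimizer (unique as a function on `[a,b]`) of the
`C`-energy over the free-boundary admissible class. -/
def IsUniqueMinFree (a b h : ℝ) (w C φ g : ℝ → ℝ) : Prop :=
  AdmissibleFree a b h w φ g ∧
  (∀ ψ k, AdmissibleFree a b h w ψ k → energy a b C g ≤ energy a b C k) ∧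
  (∀ ψ k, AdmissibleFree a b h w ψ k → energy a b C k ≤ energy a b C g →
    Set.EqOn ψ φ (Set.Icc a b))

/-- `(φ, g)` is the unique minimizer of the `C`-energy over the admissible class
with boundary conditions `φ a = c`, `φ b = d`. -/
def IsUniqueMinBC (a b h c d : ℝ) (w C φ g : ℝ → ℝ) : Prop :=
  AdmissibleBC a b h c d w φ g ∧
  (∀ ψ k, AdmissibleBC a b h c d w ψ k → energy a b C g ≤ energy a b C k) ∧
  (∀ ψ k, AdmissibleBC a b h c d w ψ k → energy a b C k ≤ energy a b C g →
    Set.EqOn ψ φ (Set.Icc a b))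

/-- `(φ, g)` is the taut string associated with `w` on `[0, T]`:
the unique minimizer of the quadratic energy among absolutely continuous functions
staying in the tube of width `h` around `w`, with `φ 0 = w 0` and `φ T = w T`. -/
def IsTautString (T h : ℝ) (w φ g : ℝ → ℝ) : Prop :=
  IsUniqueMinBC 0 T h (w 0) (w T) w (fun x => x ^ 2) φ g

/-- The times `t_n` delimiting the successive peaks and valleys of height/depth `h`. -/
noncomputable def hitTime (w : ℝ → ℝ) (h : ℝ) : ℕ → ℝ
  | 0 => 0
  | n + 1 =>
    if Even n then
      sInf {s : ℝ | hitTime w h n ≤ s ∧ w s - sInf (w '' Set.Icc (hitTime w h n) s) = h}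
    else
      sInf {s : ℝ | hitTime w h n ≤ s ∧ sSup (w '' Set.Icc (hitTime w h n) s) - w s = h}

/-- The set whose infimum defines `t_{n+1}`; its nonemptiness expresses `t_{n+1} < ∞`. -/
noncomputable def HitSet (w : ℝ → ℝ) (h : ℝ) (n : ℕ) : Set ℝ :=
  if Even n then
    {s : ℝ | hitTime w h n ≤ s ∧ w s - sInf (w '' Set.Icc (hitTime w h n) s) = h}
  else
    {s : ℝ | hitTime w h n ≤ s ∧ sSup (w '' Set.Icc (hitTime w h n) s) - w s = h}

/-- The times `t̄_n` of the `h`-extrema of `w` (Neveu–Pitman decomposition). -/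
noncomputable def extTime (w : ℝ → ℝ) (h : ℝ) : ℕ → ℝ
  | 0 => 0
  | n + 1 =>
    if Even n then
      sSup {s : ℝ | s ∈ Set.Icc (hitTime w h n) (hitTime w h (n + 1)) ∧
        sInf (w '' Set.Icc (hitTime w h n) s) = w s}
    else
      sSup {s : ℝ | s ∈ Set.Icc (hitTime w h n) (hitTime w h (n + 1)) ∧
        sSup (w '' Set.Icc (hitTime w h n) s) = w s}

/-- `N(T) = sup {n : t̄_n ≤ T}`. -/
noncomputable def NT (w : ℝ → ℝ) (h T : ℝ) : ℕ := sSup {n : ℕ | extTime w h n ≤ T}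

/-- `(φ, g)` is the function `ψ_i`: the unique minimizer of the quadratic energy on
`I_i = [t̄_i, t̄_{i+1}]` in the tube of width `h` around `w`, with boundary values
`w (t̄_i) - (-1)^i h/2` and `w (t̄_{i+1}) + (-1)^i h/2`. -/
def IsPsi (w : ℝ → ℝ) (h : ℝ) (i : ℕ) (φ g : ℝ → ℝ) : Prop :=
  IsUniqueMinBC (extTime w h i) (extTime w h (i + 1)) h
    (w (extTime w h i) - (-1 : ℝ) ^ i * (h / 2))
    (w (extTime w h (i + 1)) + (-1 : ℝ) ^ i * (h / 2))
    w (fun x => x ^ 2) φ g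

/-! On `[0, t₁]` the path stays in `[f 0, f 0 + h]` and ends at `f 0 + h`, so the constant
`f 0 + h/2` lies in the tube there, while `Ψ 0 ≤ f 0 + h/2 ≤ Ψ t₁`. Freezing `Ψ` at the value
`f 0 + h/2` up to a time `τ ≤ t₁` where `Ψ τ = f 0 + h/2` keeps it admissible and, as `c̄` is
minimal at `0`, does not increase the energy; uniqueness then gives `Ψ 0 = f 0 + h/2`.

The energy comparison needs `c̄ ∘ Ψ'` to be integrable. Otherwise it is non-integrable on one
half of `[0, V]`, and adding a small smooth bump to `Ψ` on the other half gives a different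
competitor whose energy is the same junk value `0`, contradicting uniqueness. -/

lemma ConvexOn.apply_zero_le_of_even {E : Type*} [AddCommGroup E] [Module ℝ E] {C : E → ℝ}
    (hC : ConvexOn ℝ univ C) (heven : Function.Even C) (x : E) : C 0 ≤ C x := by
  have := hC.2 (mem_univ x) (mem_univ (-x)) (by norm_num : (0 : ℝ) ≤ 1 / 2)
    (by norm_num : (0 : ℝ) ≤ 1 / 2) (by norm_num)
  rw [smul_neg, add_neg_cancel, heven x, smul_eq_mul] at this
  linarith

lemma IsMinOn.sInf_image_eq {α β : Type*} [ConditionallyCompleteLattice β] {f : α → β}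
    {s : Set α} {m : α} (hm : m ∈ s) (hmin : IsMinOn f s m) : sInf (f '' s) = f m :=
  IsLeast.csInf_eq ⟨mem_image_of_mem f hm, forall_mem_image.2 hmin⟩

lemma abs_sub_mul_le {d c t e : ℝ} (hd : |d| ≤ e) (hdc : |d - c| ≤ e) (ht₀ : 0 ≤ t)
    (ht₁ : t ≤ 1) : |d - t * c| ≤ e := by
  have hsplit : d - t * c = (1 - t) * d + t * (d - c) := by ring
  rw [abs_le] at hd hdc ⊢
  constructor <;> nlinarith [hd.1, hd.2, hdc.1, hdc.2]

section AbsolutelyContinuous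

variable {a b : ℝ} {φ g : ℝ → ℝ}

lemma MeasureTheory.IntegrableOn.intervalIntegrable_of_mem_Icc (hg : IntegrableOn g (Icc a b))
    {x y : ℝ} (hx : x ∈ Icc a b) (hy : y ∈ Icc a b) : IntervalIntegrable g volume x y :=
  (hg.mono_set (uIcc_subset_Icc hx hy)).intervalIntegrable

lemma IsACDeriv.eq_add_integral (hφ : IsACDeriv a b φ g) {x y : ℝ} (hx : x ∈ Icc a b)
    (hy : y ∈ Icc a b) : φ y = φ x + ∫ t in x..y, g t := by
  have ha : a ∈ Icc a b := ⟨le_rfl, hx.1.trans hx.2⟩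
  rw [hφ.2 y hy, hφ.2 x hx, ← intervalIntegral.integral_add_adjacent_intervals
    (hφ.1.intervalIntegrable_of_mem_Icc ha hx) (hφ.1.intervalIntegrable_of_mem_Icc hx hy)]
  ring

lemma IsACDeriv.continuousOn (hφ : IsACDeriv a b φ g) : ContinuousOn φ (Icc a b) := by
  rcases le_or_gt a b with hab | hba
  · have hprim : ContinuousOn (fun x => φ a + ∫ t in a..x, g t) (uIcc a b) :=
      continuousOn_const.add (intervalIntegral.continuousOn_primitive_interval
        (by rw [uIcc_of_le hab]; exact hφ.1))
    rw [uIcc_of_le hab] at hprim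
    exact hprim.congr hφ.2
  · simp [Icc_eq_empty_of_lt hba]

lemma IsACDeriv.comp_max (hφ : IsACDeriv a b φ g) {τ : ℝ} (hτ : τ ∈ Icc a b) :
    IsACDeriv a b (fun x => φ (max x τ)) ((Ioi τ).indicator g) := by
  have hint : IntegrableOn ((Ioi τ).indicator g) (Icc a b) := hφ.1.indicator measurableSet_Ioi
  refine ⟨hint, fun x hx => ?_⟩
  have hzero : ∀ y ≤ τ, ∫ t in a..y, (Ioi τ).indicator g t = 0 := fun y hy =>
    intervalIntegral.integral_zero_ae (Eventually.of_forall fun t ht =>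
      indicator_of_notMem (not_lt.2 (ht.2.trans (max_le hτ.1 hy))) g)
  show φ (max x τ) = φ (max a τ) + _
  rw [max_eq_right hτ.1]
  rcases le_total x τ with hxτ | hτx
  · rw [max_eq_right hxτ, hzero x hxτ, add_zero]
  · rw [max_eq_left hτx, ← intervalIntegral.integral_add_adjacent_intervals
      (hint.intervalIntegrable_of_mem_Icc ⟨le_rfl, hτ.1.trans hτ.2⟩ hτ)
      (hint.intervalIntegrable_of_mem_Icc hτ hx), hzero τ le_rfl, zero_add,
      hφ.eq_add_integral hτ hx]
    congr 1
    refine intervalIntegral.integral_congr_ae (Eventually.of_forall fun t ht => ?_)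
    rw [uIoc_of_le hτx] at ht
    exact (indicator_of_mem ht.1 g).symm

end AbsolutelyContinuous

section Minimizer

variable {a b h : ℝ} {w C φ g : ℝ → ℝ}

lemma InTube.comp_max (hφ : InTube a b h w φ) {τ : ℝ} (hflat : InTube a τ h w (fun _ => φ τ)) :
    InTube a b h w (fun x => φ (max x τ)) := fun x hx => by
  show |w x - φ (max x τ)| ≤ h / 2
  rcases le_total x τ with hxτ | hτx
  · rw [max_eq_right hxτ]; exact hflat x ⟨hx.1, hxτ⟩
  · rw [max_eq_left hτx]; exact hφ x hx

lemma energy_indicator_Ioi_le (hC : ∀ x, C 0 ≤ C x) {τ : ℝ} (hτ : τ ∈ Icc a b)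
    (hCg : IntervalIntegrable (fun u => C (g u)) volume a b) :
    energy a b C ((Ioi τ).indicator g) ≤ energy a b C g := by
  have hbefore : IntervalIntegrable (fun u => C ((Ioi τ).indicator g u)) volume a τ :=
    (intervalIntegrable_const (c := C 0)).congr fun u hu => by
      rw [uIoc_of_le hτ.1] at hu
      rw [indicator_of_notMem (s := Ioi τ) (not_lt.2 hu.2)]
  have hsub : uIcc τ b ⊆ uIcc a b := by
    rw [uIcc_of_le hτ.2, uIcc_of_le (hτ.1.trans hτ.2)]
    exact Icc_subset_Icc_left hτ.1
  have hafter : IntervalIntegrable (fun u => C ((Ioi τ).indicator g u)) volume τ b :=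
    (hCg.mono_set hsub).congr fun u hu => by
      rw [uIoc_of_le hτ.2] at hu
      rw [indicator_of_mem (s := Ioi τ) hu.1]
  refine intervalIntegral.integral_mono_on (hτ.1.trans hτ.2) (hbefore.trans hafter) hCg
    fun u _ => ?_
  by_cases hu : u ∈ Ioi τ
  · rw [indicator_of_mem hu]
  · rw [indicator_of_notMem hu]; exact hC _

lemma IsUniqueMinFree.eqOn_const_of_inTube (hφ : IsUniqueMinFree a b h w C φ g)
    (hC : ∀ x, C 0 ≤ C x) (hCg : IntervalIntegrable (fun u => C (g u)) volume a b) {τ : ℝ}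
    (hτ : τ ∈ Icc a b) (hflat : InTube a τ h w (fun _ => φ τ)) :
    EqOn φ (fun _ => φ τ) (Icc a τ) := fun x hx => by
  have hfrozen := hφ.2.2 _ _ ⟨hφ.1.1.comp_max hτ, hφ.1.2.comp_max hflat⟩
    (energy_indicator_Ioi_le hC hτ hCg) ⟨hx.1, hx.2.trans hτ.2⟩
  simpa [max_eq_right hx.2] using hfrozen.symm

-- The energy of a non-integrable `C ∘ k` is the junk value `0`, so such competitors all tie.
lemma IsUniqueMinFree.eqOn_of_not_intervalIntegrable (hφ : IsUniqueMinFree a b h w C φ g)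
    {ψ k : ℝ → ℝ} (hψ : AdmissibleFree a b h w ψ k)
    (hg : ¬ IntervalIntegrable (fun u => C (g u)) volume a b)
    (hk : ¬ IntervalIntegrable (fun u => C (k u)) volume a b) : EqOn ψ φ (Icc a b) :=
  hφ.2.2 ψ k hψ (by
    rw [energy, energy, intervalIntegral.integral_undef hg, intervalIntegral.integral_undef hk])

end Minimizer

section Perturbation

open Metric

variable {a b h : ℝ} {w C φ g : ℝ → ℝ}

/-- A smooth bump of height `c` placed inside `(p, q)`, where `|w - φ - c| < h / 2`, keeps `φ`
in the tube: there `w - φ - t c` interpolates between `w - φ` and `w - φ - c`. -/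
lemma AdmissibleFree.exists_perturbation (hφ : AdmissibleFree a b h w φ g) (hh : 0 < h)
    (hw : ContinuousOn w (Icc a b)) {p q : ℝ} (hp : a ≤ p) (hpq : p < q) (hq : q ≤ b) :
    ∃ ψ k, AdmissibleFree a b h w ψ k ∧ (∃ x ∈ Icc a b, ψ x ≠ φ x) ∧
      ∀ u ∉ Ioo p q, k u = g u := by
  obtain ⟨x₀, hx₀, hx₀'⟩ : ∃ x₀, p < x₀ ∧ x₀ < q := ⟨(p + q) / 2, by linarith, by linarith⟩
  have hx₀ab : x₀ ∈ Icc a b := ⟨by linarith, by linarith⟩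
  have hd : ContinuousAt (fun x => w x - φ x) x₀ :=
    (hw.sub hφ.1.continuousOn).continuousAt (Icc_mem_nhds (by linarith) (by linarith))
  obtain ⟨c, hc0, hc⟩ : ∃ c ≠ 0, |w x₀ - φ x₀ - c| < h / 2 := by
    by_cases h0 : w x₀ - φ x₀ = 0
    · refine ⟨h / 4, by positivity, ?_⟩
      rw [h0, zero_sub, abs_neg, abs_of_pos (by positivity)]
      linarith
    · exact ⟨w x₀ - φ x₀, h0, by simpa using half_pos hh⟩
  obtain ⟨δ, hδ, hslack⟩ := Metric.eventually_nhds_iff.1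
    ((hd.sub continuousAt_const).abs.eventually_lt continuousAt_const hc)
  set r := min δ (min (x₀ - p) (q - x₀)) / 2 with hr
  have hr0 : 0 < r := by positivity
  have hrδ : r < δ := by have := min_le_left δ (min (x₀ - p) (q - x₀)); linarith
  have hball : closedBall x₀ r ⊆ Ioo p q := fun x hx => by
    rw [mem_closedBall, Real.dist_eq, abs_le] at hx
    have := min_le_right δ (min (x₀ - p) (q - x₀))
    have := min_le_left (x₀ - p) (q - x₀)
    have := min_le_right (x₀ - p) (q - x₀)
    constructor <;> linarith
  let β : ContDiffBump x₀ := ⟨r / 2, r, by positivity, by linarith⟩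
  have hβ' : Continuous (deriv β) := (β.contDiff (n := 1)).continuous_deriv le_rfl
  refine ⟨fun x => φ x + c * β x, fun u => g u + c * deriv β u, ⟨⟨?_, fun x hx => ?_⟩, ?_⟩,
    ⟨x₀, hx₀ab, ?_⟩, fun u hu => ?_⟩
  · exact hφ.1.1.add (hβ'.integrableOn_Icc.const_mul c)
  · show φ x + c * β x = φ a + c * β a + _
    rw [intervalIntegral.integral_add
      (hφ.1.1.intervalIntegrable_of_mem_Icc ⟨le_rfl, hx.1.trans hx.2⟩ hx)
      ((hβ'.intervalIntegrable _ _).const_mul c), intervalIntegral.integral_const_mul,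
      intervalIntegral.integral_deriv_eq_sub (fun y _ => (β.contDiff (n := 1)).differentiable
        one_ne_zero y) (hβ'.intervalIntegrable _ _), hφ.1.2 x hx]
    ring
  · intro x hx
    show |w x - (φ x + c * β x)| ≤ h / 2
    by_cases hβx : β x = 0
    · simpa [hβx] using hφ.2 x hx
    · have hxr : x ∈ ball x₀ β.rOut := by rw [← β.support_eq]; exact hβx
      rw [show w x - (φ x + c * β x) = w x - φ x - β x * c by ring]
      exact abs_sub_mul_le (hφ.2 x hx) (hslack (ball_subset_ball hrδ.le hxr)).le β.nonneg
        β.le_one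
  · simp [β.one_of_mem_closedBall (mem_closedBall_self (by positivity)), hc0]
  · have hβu : deriv β u = 0 := Function.notMem_support.1 fun hu' =>
      hu (hball (β.tsupport_eq ▸ support_deriv_subset hu'))
    simp [hβu]

lemma IsUniqueMinFree.intervalIntegrable_of_disjoint (hφ : IsUniqueMinFree a b h w C φ g)
    (hh : 0 < h) (hw : ContinuousOn w (Icc a b)) {l r p q : ℝ} (hl : a ≤ l) (hlr : l ≤ r)
    (hr : r ≤ b) (hp : a ≤ p) (hpq : p < q) (hq : q ≤ b) (hdisj : Disjoint (Ioc l r) (Ioo p q)) :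
    IntervalIntegrable (fun u => C (g u)) volume l r := by
  by_contra hwild
  obtain ⟨ψ, k, hψ, ⟨x, hx, hne⟩, hk⟩ := hφ.1.exists_perturbation hh hw hp hpq hq
  have hsub : uIcc l r ⊆ uIcc a b := by
    rw [uIcc_of_le hlr, uIcc_of_le (hl.trans (hlr.trans hr))]
    exact Icc_subset_Icc hl hr
  refine hne (hφ.eqOn_of_not_intervalIntegrable hψ (fun hI => hwild (hI.mono_set hsub))
    (fun hI => hwild ((hI.mono_set hsub).congr fun u hu => ?_)) hx)
  rw [uIoc_of_le hlr] at hu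
  rw [hk u (disjoint_left.1 hdisj hu)]

theorem IsUniqueMinFree.intervalIntegrable_energy (hφ : IsUniqueMinFree a b h w C φ g)
    (hh : 0 < h) (hw : ContinuousOn w (Icc a b)) (hab : a ≤ b) :
    IntervalIntegrable (fun u => C (g u)) volume a b := by
  rcases hab.eq_or_lt with rfl | hab
  · exact IntervalIntegrable.refl
  obtain ⟨m, ham, hmb⟩ : ∃ m, a < m ∧ m < b := ⟨(a + b) / 2, by linarith, by linarith⟩
  have hleft : IntervalIntegrable (fun u => C (g u)) volume a m :=
    hφ.intervalIntegrable_of_disjoint hh hw le_rfl ham.le hmb.le ham.le hmb le_rfl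
      (disjoint_left.2 fun _ hu hu' => hu'.1.not_ge hu.2)
  have hright : IntervalIntegrable (fun u => C (g u)) volume m b :=
    hφ.intervalIntegrable_of_disjoint hh hw ham.le hmb.le le_rfl le_rfl ham hmb.le
      (disjoint_left.2 fun _ hu hu' => lt_asymm hu.1 hu'.2)
  exact hleft.trans hright

end Perturbation

section FirstExcursion

variable {f : ℝ → ℝ} {h : ℝ}

lemma mem_hitSet_zero {s : ℝ} :
    s ∈ HitSet f h 0 ↔ 0 ≤ s ∧ f s - sInf (f '' Icc 0 s) = h := by
  simp [HitSet, hitTime]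

lemma hitTime_one_eq_sInf : hitTime f h 1 = sInf (HitSet f h 0) := by
  simp [HitSet, hitTime]

lemma extTime_one_eq_sSup :
    extTime f h 1 = sSup {s | s ∈ Icc 0 (hitTime f h 1) ∧ sInf (f '' Icc 0 s) = f s} := by
  simp [extTime, hitTime]

lemma hitTime_one_le {s : ℝ} (hs : s ∈ HitSet f h 0) : hitTime f h 1 ≤ s :=
  hitTime_one_eq_sInf ▸ csInf_le ⟨0, fun _ ht => (mem_hitSet_zero.1 ht).1⟩ hs

lemma hitTime_one_nonneg (hfin : (HitSet f h 0).Nonempty) : 0 ≤ hitTime f h 1 :=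
  hitTime_one_eq_sInf ▸ le_csInf hfin fun _ ht => (mem_hitSet_zero.1 ht).1

-- The running minimum on `[0, x]` is attained at a time of `t̄₁`'s defining set, hence at `0`.
lemma apply_zero_le_of_extTime_one_eq_zero (hf : Continuous f) (ht1 : extTime f h 1 = 0)
    {x : ℝ} (hx : x ∈ Icc 0 (hitTime f h 1)) : f 0 ≤ f x := by
  obtain ⟨m, hm, hmin⟩ := isCompact_Icc.exists_isMinOn (nonempty_Icc.2 hx.1) hf.continuousOn
  have hm_mem : m ∈ {s | s ∈ Icc 0 (hitTime f h 1) ∧ sInf (f '' Icc 0 s) = f s} :=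
    ⟨⟨hm.1, hm.2.trans hx.2⟩,
      (hmin.on_subset (Icc_subset_Icc_right hm.2)).sInf_image_eq ⟨hm.1, le_rfl⟩⟩
  have hm0 : m ≤ 0 := by
    rw [← ht1, extTime_one_eq_sSup]
    exact le_csSup ⟨hitTime f h 1, fun _ hs => hs.1.2⟩ hm_mem
  obtain rfl : m = 0 := le_antisymm hm0 hm.1
  exact hmin ⟨hx.1, le_rfl⟩

lemma sInf_image_Icc_zero_of_extTime_one_eq_zero (hf : Continuous f) (ht1 : extTime f h 1 = 0)
    {s : ℝ} (hs : s ∈ Icc 0 (hitTime f h 1)) : sInf (f '' Icc 0 s) = f 0 :=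
  IsMinOn.sInf_image_eq ⟨le_rfl, hs.1⟩ fun _ hx =>
    apply_zero_le_of_extTime_one_eq_zero hf ht1 ⟨hx.1, hx.2.trans hs.2⟩

lemma apply_le_add_of_extTime_one_eq_zero (hf : Continuous f) (ht1 : extTime f h 1 = 0)
    (hh : 0 ≤ h) {x : ℝ} (hx : x ∈ Icc 0 (hitTime f h 1)) : f x ≤ f 0 + h := by
  by_contra! hlt
  obtain ⟨s, hs, hfs⟩ := intermediate_value_Icc hx.1 hf.continuousOn
    (⟨by linarith, hlt.le⟩ : f 0 + h ∈ Icc (f 0) (f x))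
  have hsS : s ∈ HitSet f h 0 := mem_hitSet_zero.2 ⟨hs.1, by
    rw [sInf_image_Icc_zero_of_extTime_one_eq_zero hf ht1 ⟨hs.1, hs.2.trans hx.2⟩, hfs]; ring⟩
  have hsx : s = x := le_antisymm hs.2 (hx.2.trans (hitTime_one_le hsS))
  rw [← hsx, hfs] at hlt
  exact lt_irrefl _ hlt

/-- If `f t₁ < f 0 + h`, take `s` in the hitting set just after `t₁` and a minimizer `m` of `f`
on `[0, s]`: either `m ≤ t₁`, so `f s = f m + h ≥ f 0 + h`, or `m` is close to `t₁` too, so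
`f s - f m < h`; both contradict continuity at `t₁`. -/
lemma add_le_apply_hitTime_one (hf : Continuous f) (ht1 : extTime f h 1 = 0)
    (hh : 0 < h) (hfin : (HitSet f h 0).Nonempty) :
    f 0 + h ≤ f (hitTime f h 1) := by
  set t₁ := hitTime f h 1
  by_contra! hlt
  set ε := min (h / 2) (f 0 + h - f t₁)
  have hε : 0 < ε := lt_min (half_pos hh) (by linarith)
  obtain ⟨δ, hδ, hclose⟩ := Metric.continuous_iff.1 hf t₁ ε hε
  obtain ⟨s, hs, hst⟩ := exists_lt_of_csInf_lt hfin
    (show sInf (HitSet f h 0) < t₁ + δ by rw [← hitTime_one_eq_sInf]; linarith)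
  have ht₁s : t₁ ≤ s := hitTime_one_le hs
  have hnear : ∀ y, t₁ ≤ y → y ≤ s → |f y - f t₁| < ε := fun y hy hys => by
    rw [← Real.dist_eq]
    exact hclose y (by rw [Real.dist_eq, abs_lt]; constructor <;> linarith)
  obtain ⟨m, hm, hmin⟩ := isCompact_Icc.exists_isMinOn
    (nonempty_Icc.2 (hitTime_one_nonneg hfin |>.trans ht₁s)) hf.continuousOn
  have hfs : f s - f m = h := hmin.sInf_image_eq hm ▸ (mem_hitSet_zero.1 hs).2
  have hs_near := abs_lt.1 (hnear s ht₁s le_rfl)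
  have hε_le := min_le_left (h / 2) (f 0 + h - f t₁)
  have hε_le' := min_le_right (h / 2) (f 0 + h - f t₁)
  rcases le_or_gt m t₁ with hmt | hmt
  · have := apply_zero_le_of_extTime_one_eq_zero hf ht1 ⟨hm.1, hmt⟩
    linarith
  · have hm_near := abs_lt.1 (hnear m hmt.le hm.2)
    linarith

end FirstExcursion

/-- **Lemma 2.1.** If `t̄_1(f) = 0` and `V ≥ t_1(f)`, then the unique minimizer `Ψ`
of the free-boundary `c̄`-energy problem on `[0, V]` satisfies `Ψ 0 = f 0 + h/2`. -/
theorem free_minimizer_starts_at_top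
    (h : ℝ) (hh : 0 < h)
    (cbar : ℝ → ℝ) (hconv : StrictConvexOn ℝ Set.univ cbar)
    (heven : ∀ x : ℝ, cbar (-x) = cbar x)
    (f : ℝ → ℝ) (hf : Continuous f)
    (hfin : (HitSet f h 0).Nonempty)
    (ht1 : extTime f h 1 = 0)
    (V : ℝ) (hV : hitTime f h 1 ≤ V)
    (Ψ Ψ' : ℝ → ℝ) (hΨ : IsUniqueMinFree 0 V h f cbar Ψ Ψ') :
    Ψ 0 = f 0 + h / 2 := by
  set t₁ := hitTime f h 1
  have ht₁ : 0 ≤ t₁ := hitTime_one_nonneg hfin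
  have hflat : InTube 0 t₁ h f (fun _ => f 0 + h / 2) := fun x hx => abs_le.2
    ⟨by linarith [apply_zero_le_of_extTime_one_eq_zero hf ht1 hx],
      by linarith [apply_le_add_of_extTime_one_eq_zero hf ht1 hh.le hx]⟩
  have hlow : Ψ 0 ≤ f 0 + h / 2 := by
    linarith [(abs_le.1 (hΨ.1.2 0 ⟨le_rfl, ht₁.trans hV⟩)).1]
  have hhigh : f 0 + h / 2 ≤ Ψ t₁ := by
    linarith [(abs_le.1 (hΨ.1.2 t₁ ⟨ht₁, hV⟩)).2, add_le_apply_hitTime_one hf ht1 hh hfin]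
  obtain ⟨τ, hτ, hΨτ⟩ := intermediate_value_Icc ht₁
    (hΨ.1.1.continuousOn.mono (Icc_subset_Icc_right hV)) ⟨hlow, hhigh⟩
  have hC : ∀ x, cbar 0 ≤ cbar x := hconv.convexOn.apply_zero_le_of_even heven
  have hCΨ' := hΨ.intervalIntegrable_energy hh hf.continuousOn (ht₁.trans hV)
  rw [← hΨτ] at hflat ⊢
  exact hΨ.eqOn_const_of_inTube hC hCΨ' ⟨hτ.1, hτ.2.trans hV⟩
    (fun x hx => hflat x ⟨hx.1, hx.2.trans hτ.2⟩) ⟨le_rfl, hτ.1⟩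
end
end

section
/- Let {(X_i, τ_i)}_{i≥1} be an i.i.d. sequence of pairs of non-negative random variables as in the context. Then, as t → ∞, (1/√t)·( (U_{Ñ(t)−1} − U_{[t/τ̄]}) − X̄·(Ñ(t) − [t/τ̄]) ) converges to 0 in probability, where [x] denotes the integer part of x. -/
open MeasureTheory Set Filter

noncomputable section

/-- `{(X_i, τ_i)}` is an i.i.d. sequence of pairs of non-negative random variables. -/
def IsIIDPairs {Ω : Type*} [MeasurableSpace Ω] (μ : MeasureTheory.Measure Ω)
    (X τ : ℕ → Ω → ℝ) : Prop :=
  (∀ i, Measurable (X i)) ∧ (∀ i, Measurable (τ i)) ∧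
  (∀ i ω, 0 ≤ X i ω) ∧ (∀ i ω, 0 ≤ τ i ω) ∧
  ProbabilityTheory.iIndepFun
    (fun i ω => (X i ω, τ i ω)) μ ∧
  (∀ i, MeasureTheory.Measure.map (fun ω => (X i ω, τ i ω)) μ =
    MeasureTheory.Measure.map (fun ω => (X 0 ω, τ 0 ω)) μ)

/-- `S_n = τ_1 + ⋯ + τ_n` (the sum of the first `n` of the `τ`'s). -/
def Spartial {Ω : Type*} (τ : ℕ → Ω → ℝ) (n : ℕ) (ω : Ω) : ℝ :=
  ∑ k ∈ Finset.range n, τ k ω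

/-- `U_n = X_1 + ⋯ + X_n` (the sum of the first `n` of the `X`'s). -/
def Upartial {Ω : Type*} (X : ℕ → Ω → ℝ) (n : ℕ) (ω : Ω) : ℝ :=
  ∑ k ∈ Finset.range n, X k ω

/-- `Ñ(t) = sup {n ≥ 0 : S_n ≤ t}`. -/
noncomputable def Ntilde {Ω : Type*} (τ : ℕ → Ω → ℝ) (t : ℝ) (ω : Ω) : ℕ :=
  sSup {n : ℕ | Spartial τ n ω ≤ t}

open ProbabilityTheory

/-!
With `m = ⌊t / τ̄⌋` and the centred walk `D n = U n - n X̄`, the quantity in question is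
`(D (Ñ(t) - 1) - D m - X̄) / √t`. Chebyshev's inequality for `S n - n τ̄` at `n ≈ t / τ̄ ± K √t`
shows that `|Ñ(t) - t / τ̄| ≤ K √t` with probability close to one once `K` is large. It then
suffices that `D` moves by `o(√t)` on the window `|n - m| ≤ K √t`. As `X ≥ 0`, `U` is monotone,
so between two consecutive points of a grid of mesh `δ √t` the walk `D` leaves the range of its
values at those points by at most `X̄ δ √t`. The grid has a bounded number of points, each at
distance `O(√t)` from `m`, so Chebyshev's inequality at the grid points (variance `O(√t)`,
threshold of order `√t`) bounds the total probability by `O(1 / √t)`.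
-/

lemma ENNReal.tendsto_nhds_zero_of_forall_ofReal {α : Type*} {l : Filter α} {u : α → ENNReal}
    (h : ∀ r : ℝ, 0 < r → ∀ᶠ x in l, u x ≤ ENNReal.ofReal r) : Tendsto u l (nhds 0) := by
  refine ENNReal.tendsto_nhds_zero.2 fun η hη => ?_
  obtain ⟨r, -, hr, hrη⟩ := ENNReal.lt_iff_exists_real_btwn.1 hη
  exact (h r (ENNReal.ofReal_pos.1 hr)).mono fun x hx => hx.trans hrη.le

lemma eventually_mul_sqrt_add_le_div {θ : ℝ} (hθ : 0 < θ) (a b : ℝ) :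
    ∀ᶠ t : ℝ in atTop, a * √t + b ≤ t / θ := by
  have h : Tendsto (fun u : ℝ => u * (u / θ - a)) atTop atTop :=
    tendsto_id.atTop_mul_atTop₀
      (tendsto_atTop_add_const_right _ (-a) (tendsto_id.atTop_div_const hθ))
  filter_upwards [Real.tendsto_sqrt_atTop.eventually (h.eventually_ge_atTop b),
    eventually_ge_atTop 0] with t ht ht0
  have hdiv : t / θ = √t * (√t / θ) := by rw [← mul_div_assoc, Real.mul_self_sqrt ht0]
  rw [hdiv]
  linarith

lemma sSup_setOf_le_mem_Ico {f : ℕ → ℝ} (hf : Monotone f) {t : ℝ} {n₁ n₂ : ℕ}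
    (h₁ : f n₁ ≤ t) (h₂ : t < f n₂) : sSup {n | f n ≤ t} ∈ Set.Ico n₁ n₂ := by
  have hbdd : BddAbove {n | f n ≤ t} := ⟨n₂, fun n hn => (hf.reflect_lt (lt_of_le_of_lt hn h₂)).le⟩
  exact ⟨le_csSup hbdd h₁, hf.reflect_lt (lt_of_le_of_lt (Nat.sSup_mem ⟨n₁, h₁⟩ hbdd) h₂)⟩

lemma Nat.exists_lt_mem_Icc_of_lt_add_mul {lo n L J : ℕ} (hL : 0 < L) (hlo : lo ≤ n)
    (hn : n < lo + J * L) : ∃ j < J, lo + j * L ≤ n ∧ n ≤ lo + (j + 1) * L := by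
  refine ⟨(n - lo) / L, (Nat.div_lt_iff_lt_mul hL).2 (by omega), ?_, ?_⟩
  · have := Nat.div_mul_le_self (n - lo) L
    omega
  · have := Nat.lt_div_mul_add (a := n - lo) hL
    rw [add_mul, one_mul]
    omega

lemma one_le_and_abs_cast_sub_one_sub_floor_le {N : ℕ} {x y : ℝ} (hN : |(N : ℝ) - x| ≤ y)
    (hxy : y + 1 ≤ x) : 1 ≤ N ∧ |((N - 1 : ℕ) : ℝ) - ⌊x⌋₊| ≤ y + 2 := by
  rw [abs_sub_le_iff] at hN
  have hN1 : 1 ≤ N := by exact_mod_cast (show (1 : ℝ) ≤ N by linarith)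
  have hfloor := Nat.floor_le (show 0 ≤ x by linarith [abs_nonneg ((N : ℝ) - x)])
  have hfloor' := Nat.lt_floor_add_one x
  refine ⟨hN1, ?_⟩
  rw [Nat.cast_sub hN1, abs_sub_le_iff]
  push_cast
  constructor <;> linarith

section CenteredPartialSum

variable {Ω : Type*}

def centeredPartialSum (Z : ℕ → Ω → ℝ) (c : ℝ) (n : ℕ) (ω : Ω) : ℝ :=
  Upartial Z n ω - n * c

@[simp]
lemma centeredPartialSum_zero (Z : ℕ → Ω → ℝ) (c : ℝ) (ω : Ω) : centeredPartialSum Z c 0 ω = 0 := by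
  simp [centeredPartialSum, Upartial]

lemma centeredPartialSum_sub_centeredPartialSum (Z : ℕ → Ω → ℝ) (c : ℝ) (ω : Ω) {n p : ℕ}
    (hnp : n ≤ p) :
    centeredPartialSum Z c p ω - centeredPartialSum Z c n ω =
      ∑ k ∈ Finset.Ico n p, Z k ω - ((p - n : ℕ) : ℝ) * c := by
  rw [centeredPartialSum, centeredPartialSum, Upartial, Upartial, Finset.sum_Ico_eq_sub _ hnp,
    Nat.cast_sub hnp]
  ring

lemma Upartial_sub_sub_eq_centeredPartialSum (Z : ℕ → Ω → ℝ) (c : ℝ) (ω : Ω) {N : ℕ}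
    (hN : 1 ≤ N) (m : ℕ) :
    (Upartial Z (N - 1) ω - Upartial Z m ω) - c * ((N : ℝ) - m) =
      centeredPartialSum Z c (N - 1) ω - centeredPartialSum Z c m ω - c := by
  rw [centeredPartialSum, centeredPartialSum, Nat.cast_sub hN]
  ring

lemma Upartial_monotone {Z : ℕ → Ω → ℝ} {ω : Ω} (hZ : ∀ k, 0 ≤ Z k ω) :
    Monotone fun n => Upartial Z n ω := fun _ _ hnp =>
  Finset.sum_le_sum_of_subset_of_nonneg (Finset.range_subset_range.2 hnp) fun k _ _ => hZ k

variable {Z : ℕ → Ω → ℝ} {c : ℝ}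

lemma abs_centeredPartialSum_sub_lt_of_le_of_le {ω : Ω} (hZ : ∀ k, 0 ≤ Z k ω) (hc : 0 ≤ c)
    {m n p q : ℕ} {η : ℝ} (hpn : p ≤ n) (hnq : n ≤ q)
    (hp : |centeredPartialSum Z c p ω - centeredPartialSum Z c m ω| < η)
    (hq : |centeredPartialSum Z c q ω - centeredPartialSum Z c m ω| < η) :
    |centeredPartialSum Z c n ω - centeredPartialSum Z c m ω| < η + ((q : ℝ) - p) * c := by
  have hUp := Upartial_monotone hZ hpn
  have hUq := Upartial_monotone hZ hnq
  have hpn' : (p : ℝ) ≤ n := by exact_mod_cast hpn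
  have hnq' : (n : ℝ) ≤ q := by exact_mod_cast hnq
  have hlo : ((n : ℝ) - p) * c ≤ ((q : ℝ) - p) * c := by gcongr
  have hhi : ((q : ℝ) - n) * c ≤ ((q : ℝ) - p) * c := by gcongr
  simp only [centeredPartialSum] at hp hq ⊢
  rw [abs_lt] at hp hq ⊢
  constructor <;> linarith [hp.1, hq.2]

lemma abs_centeredPartialSum_sub_lt_of_grid {ω : Ω} (hZ : ∀ k, 0 ≤ Z k ω) (hc : 0 ≤ c)
    {m n lo L J : ℕ} {η : ℝ} (hL : 0 < L)
    (hgrid : ∀ j ≤ J, |centeredPartialSum Z c (lo + j * L) ω - centeredPartialSum Z c m ω| < η)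
    (hlo : lo ≤ n) (hn : n < lo + J * L) :
    |centeredPartialSum Z c n ω - centeredPartialSum Z c m ω| < η + L * c := by
  obtain ⟨j, hjJ, hjn, hnj⟩ := Nat.exists_lt_mem_Icc_of_lt_add_mul hL hlo hn
  have h := abs_centeredPartialSum_sub_lt_of_le_of_le hZ hc hjn hnj (hgrid j hjJ.le)
    (hgrid (j + 1) hjJ)
  convert h using 3
  push_cast
  ring

lemma setOf_exists_le_abs_centeredPartialSum_sub_subset (hZ : ∀ k ω, 0 ≤ Z k ω) (hc : 0 ≤ c)
    {m a L J : ℕ} {y η : ℝ} (hya : y ≤ a) (hL : 0 < L) (haJ : 2 * a < J * L) :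
    {ω | ∃ n : ℕ, |(n : ℝ) - m| ≤ y ∧
        η + L * c ≤ |centeredPartialSum Z c n ω - centeredPartialSum Z c m ω|} ⊆
      ⋃ j ∈ Finset.range (J + 1),
        {ω | η ≤ |centeredPartialSum Z c (m - a + j * L) ω - centeredPartialSum Z c m ω|} := by
  rintro ω ⟨n, hnm, hdev⟩
  rw [abs_sub_le_iff] at hnm
  have hmn : m ≤ n + a := by exact_mod_cast (show (m : ℝ) ≤ n + a by linarith)
  have hnm : n ≤ m + a := by exact_mod_cast (show (n : ℝ) ≤ m + a by linarith)
  simp only [Set.mem_iUnion, Finset.mem_range, Set.mem_ofPred_eq, exists_prop]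
  by_contra! hgrid
  have := abs_centeredPartialSum_sub_lt_of_grid (hZ · ω) hc hL
    (fun j hj => hgrid j (Nat.lt_succ_of_le hj)) (by omega : m - a ≤ n) (by omega)
  linarith

lemma abs_Ntilde_sub_div_lt {ω : Ω} (hZ : ∀ k, 0 ≤ Z k ω) {θ t y : ℝ} (hθ : 0 < θ)
    (hy₀ : 0 ≤ y) (hy : y ≤ t / θ) (h₁ : |centeredPartialSum Z θ ⌊t / θ - y⌋₊ ω| < θ * y)
    (h₂ : |centeredPartialSum Z θ ⌈t / θ + y⌉₊ ω| < θ * y) :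
    |(Ntilde Z t ω : ℝ) - t / θ| < y + 1 := by
  set n₁ := ⌊t / θ - y⌋₊
  set n₂ := ⌈t / θ + y⌉₊
  have hn₁ : (n₁ : ℝ) * θ ≤ (t / θ - y) * θ := by gcongr; exact Nat.floor_le (by linarith)
  have hn₂ : (t / θ + y) * θ ≤ n₂ * θ := by gcongr; exact Nat.le_ceil _
  have htθ : t / θ * θ = t := div_mul_cancel₀ t hθ.ne'
  simp only [centeredPartialSum, Upartial, abs_lt] at h₁ h₂
  obtain ⟨hN₁, hN₂⟩ := sSup_setOf_le_mem_Ico (Upartial_monotone hZ)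
    (show Spartial Z n₁ ω ≤ t by unfold Spartial; linarith)
    (show t < Spartial Z n₂ ω by unfold Spartial; linarith)
  have hN₁' : (n₁ : ℝ) ≤ Ntilde Z t ω := by exact_mod_cast hN₁
  have hN₂' : (Ntilde Z t ω : ℝ) + 1 ≤ n₂ := by exact_mod_cast hN₂
  have hn₁' : t / θ - y < n₁ + 1 := Nat.lt_floor_add_one _
  have hn₂' : (n₂ : ℝ) < t / θ + y + 1 := Nat.ceil_lt_add_one (by linarith)
  rw [abs_sub_lt_iff]
  constructor <;> linarith

lemma le_abs_centeredPartialSum_sub_of_le_abs {ω : Ω} (hc : 0 ≤ c) {N m : ℕ} {s ε : ℝ}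
    (hs : 0 < s) (hcs : c ≤ ε / 2 * s) (hN : 1 ≤ N)
    (h : ε ≤ |1 / s * ((Upartial Z (N - 1) ω - Upartial Z m ω) - c * ((N : ℝ) - m))|) :
    ε / 2 * s ≤ |centeredPartialSum Z c (N - 1) ω - centeredPartialSum Z c m ω| := by
  rw [Upartial_sub_sub_eq_centeredPartialSum _ _ _ hN, abs_mul, abs_of_pos (one_div_pos.2 hs),
    one_div, le_inv_mul_iff₀ hs] at h
  have := abs_sub (centeredPartialSum Z c (N - 1) ω - centeredPartialSum Z c m ω) c
  rw [abs_of_nonneg hc] at this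
  linarith

end CenteredPartialSum

section IsIIDPairs

variable {Ω : Type*} [MeasurableSpace Ω] {μ : Measure Ω} {X τ : ℕ → Ω → ℝ}

lemma IsIIDPairs.identDistrib_pair (h : IsIIDPairs μ X τ) (i : ℕ) :
    IdentDistrib (fun ω => (X i ω, τ i ω)) (fun ω => (X 0 ω, τ 0 ω)) μ μ :=
  ⟨((h.1 i).prodMk (h.2.1 i)).aemeasurable, ((h.1 0).prodMk (h.2.1 0)).aemeasurable,
    h.2.2.2.2.2 i⟩

lemma IsIIDPairs.identDistrib_fst (h : IsIIDPairs μ X τ) (i : ℕ) :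
    IdentDistrib (X i) (X 0) μ μ :=
  (h.identDistrib_pair i).comp measurable_fst

lemma IsIIDPairs.identDistrib_snd (h : IsIIDPairs μ X τ) (i : ℕ) :
    IdentDistrib (τ i) (τ 0) μ μ :=
  (h.identDistrib_pair i).comp measurable_snd

lemma IsIIDPairs.pairwise_indepFun_fst (h : IsIIDPairs μ X τ) :
    Pairwise fun i j => IndepFun (X i) (X j) μ := fun _ _ hij =>
  (h.2.2.2.2.1.comp (fun _ => Prod.fst) fun _ => measurable_fst).indepFun hij

lemma IsIIDPairs.pairwise_indepFun_snd (h : IsIIDPairs μ X τ) :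
    Pairwise fun i j => IndepFun (τ i) (τ j) μ := fun _ _ hij =>
  (h.2.2.2.2.1.comp (fun _ => Prod.snd) fun _ => measurable_snd).indepFun hij

end IsIIDPairs

section PairwiseIndependentIdenticallyDistributed

variable {Ω : Type*} [MeasurableSpace Ω] {μ : Measure Ω} [IsFiniteMeasure μ] {Z : ℕ → Ω → ℝ}

lemma measure_le_abs_centeredPartialSum_sub_le
    (hind : Pairwise fun i j => IndepFun (Z i) (Z j) μ)
    (hident : ∀ i, IdentDistrib (Z i) (Z 0) μ μ) (hZ : MemLp (Z 0) 2 μ)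
    {η : ℝ} (hη : 0 < η) (n p : ℕ) :
    μ {ω | η ≤ |centeredPartialSum Z (∫ ω, Z 0 ω ∂μ) p ω -
        centeredPartialSum Z (∫ ω, Z 0 ω ∂μ) n ω|} ≤
      ENNReal.ofReal (|(p : ℝ) - n| * variance (Z 0) μ / η ^ 2) := by
  wlog hnp : n ≤ p generalizing n p
  · simpa only [abs_sub_comm] using this p n (le_of_not_ge hnp)
  have hmem : ∀ i, MemLp (Z i) 2 μ := fun i => (hident i).symm.memLp_snd hZ
  have hmean : ∫ ω, (∑ k ∈ Finset.Ico n p, Z k) ω ∂μ = ((p - n : ℕ) : ℝ) * ∫ ω, Z 0 ω ∂μ := by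
    simp only [Finset.sum_apply]
    rw [integral_finsetSum _ fun i _ => (hmem i).integrable one_le_two]
    simp [fun i => (hident i).integral_eq]
  have hvar : variance (∑ k ∈ Finset.Ico n p, Z k) μ = ((p - n : ℕ) : ℝ) * variance (Z 0) μ := by
    rw [IndepFun.variance_sum (fun i _ => hmem i) fun i _ j _ hij => hind hij]
    simp [fun i => (hident i).variance_eq]
  have hcheb := meas_ge_le_variance_div_sq
    (memLp_finsetSum' (Finset.Ico n p) fun i _ => hmem i) hη
  rw [hmean, hvar] at hcheb
  convert hcheb using 5 with ω
  · rw [centeredPartialSum_sub_centeredPartialSum _ _ _ hnp, Finset.sum_apply]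
  · rw [abs_of_nonneg (sub_nonneg.2 (Nat.cast_le.2 hnp)), Nat.cast_sub hnp]

lemma measure_biUnion_le_abs_centeredPartialSum_sub_le
    (hind : Pairwise fun i j => IndepFun (Z i) (Z j) μ)
    (hident : ∀ i, IdentDistrib (Z i) (Z 0) μ μ) (hZ : MemLp (Z 0) 2 μ)
    {η w : ℝ} (hη : 0 < η) (m J : ℕ) (g : ℕ → ℕ) (hg : ∀ j ≤ J, |(g j : ℝ) - m| ≤ w) :
    μ (⋃ j ∈ Finset.range (J + 1), {ω | η ≤ |centeredPartialSum Z (∫ ω, Z 0 ω ∂μ) (g j) ω -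
        centeredPartialSum Z (∫ ω, Z 0 ω ∂μ) m ω|}) ≤
      ENNReal.ofReal ((J + 1) * (w * variance (Z 0) μ / η ^ 2)) := by
  have hv := variance_nonneg (Z 0) μ
  have hw : 0 ≤ w := (abs_nonneg _).trans (hg 0 (Nat.zero_le J))
  calc _ ≤ ∑ j ∈ Finset.range (J + 1), ENNReal.ofReal (w * variance (Z 0) μ / η ^ 2) :=
        (measure_biUnion_finset_le _ _).trans <| Finset.sum_le_sum fun j hj =>
          (measure_le_abs_centeredPartialSum_sub_le hind hident hZ hη m (g j)).trans <|
            ENNReal.ofReal_le_ofReal <| by gcongr; exact hg j (Finset.mem_range_succ_iff.1 hj)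
    _ = ENNReal.ofReal ((J + 1) * (w * variance (Z 0) μ / η ^ 2)) := by
        rw [Finset.sum_const, Finset.card_range, nsmul_eq_mul, ← ENNReal.ofReal_natCast,
          ← ENNReal.ofReal_mul (by positivity)]
        push_cast
        rfl

lemma measure_exists_le_abs_centeredPartialSum_sub_le
    (hind : Pairwise fun i j => IndepFun (Z i) (Z j) μ)
    (hident : ∀ i, IdentDistrib (Z i) (Z 0) μ μ) (hZ : MemLp (Z 0) 2 μ)
    (hZnn : ∀ k ω, 0 ≤ Z k ω) {K δ s η : ℝ} {J : ℕ} (hK : 0 ≤ K) (hδ : 0 < δ) (hs : 1 ≤ s)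
    (hη : 0 < η) (hJ : 2 * (K + 1) < J * δ) (m : ℕ) :
    μ {ω | ∃ n : ℕ, |(n : ℝ) - m| ≤ K * s ∧
        η + ⌈δ * s⌉₊ * ∫ ω, Z 0 ω ∂μ ≤ |centeredPartialSum Z (∫ ω, Z 0 ω ∂μ) n ω -
          centeredPartialSum Z (∫ ω, Z 0 ω ∂μ) m ω|} ≤
      ENNReal.ofReal ((J + 1) * ((K + 1 + J * δ + J) * s * variance (Z 0) μ / η ^ 2)) := by
  set a := ⌈K * s⌉₊
  set L := ⌈δ * s⌉₊
  have hKa := Nat.le_ceil (K * s)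
  have ha : (a : ℝ) ≤ (K + 1) * s := by
    have := Nat.ceil_lt_add_one (by positivity : 0 ≤ K * s)
    nlinarith
  have hL : (L : ℝ) ≤ δ * s + 1 := (Nat.ceil_lt_add_one (by positivity)).le
  have haJ : 2 * a < J * L := by
    have := Nat.le_ceil (δ * s)
    exact_mod_cast (show (2 * a : ℝ) < J * L by nlinarith)
  have hgrid : ∀ j ≤ J, |((m - a + j * L : ℕ) : ℝ) - m| ≤ (K + 1 + J * δ + J) * s := by
    intro j hj
    have hjJ : (j : ℝ) ≤ J := by exact_mod_cast hj
    have hlo : (m : ℝ) ≤ ((m - a + j * L : ℕ) : ℝ) + a := by exact_mod_cast (by omega)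
    have hhi : ((m - a + j * L : ℕ) : ℝ) ≤ m + j * L := by exact_mod_cast (by omega)
    rw [abs_sub_le_iff]
    constructor <;> nlinarith
  exact (measure_mono (setOf_exists_le_abs_centeredPartialSum_sub_subset hZnn
    (integral_nonneg (hZnn 0)) hKa (Nat.ceil_pos.2 (by positivity)) haJ)).trans
    (measure_biUnion_le_abs_centeredPartialSum_sub_le hind hident hZ hη m J _ hgrid)

lemma eventually_measure_exists_le_abs_centeredPartialSum_sub_le
    (hind : Pairwise fun i j => IndepFun (Z i) (Z j) μ)
    (hident : ∀ i, IdentDistrib (Z i) (Z 0) μ μ) (hZ : MemLp (Z 0) 2 μ)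
    (hZnn : ∀ k ω, 0 ≤ Z k ω) {K ε r : ℝ} (hK : 0 ≤ K) (hε : 0 < ε) (hr : 0 < r) :
    ∀ᶠ s in atTop, ∀ m : ℕ,
      μ {ω | ∃ n : ℕ, |(n : ℝ) - m| ≤ K * s ∧
        ε * s ≤ |centeredPartialSum Z (∫ ω, Z 0 ω ∂μ) n ω -
          centeredPartialSum Z (∫ ω, Z 0 ω ∂μ) m ω|} ≤ ENNReal.ofReal r := by
  set c := ∫ ω, Z 0 ω ∂μ
  have hc : 0 ≤ c := integral_nonneg (hZnn 0)
  -- `δ` makes the drift `c ⌈δ s⌉₊` over one grid step at most `ε s / 2` once `s ≥ 4 c / ε`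
  set δ := ε / (4 * (c + 1))
  have hδ : 0 < δ := by positivity
  have hcδ : c * δ ≤ ε / 4 := by
    rw [mul_div_assoc', div_le_div_iff₀ (by positivity) (by norm_num)]
    nlinarith
  set J : ℕ := ⌊2 * (K + 1) / δ⌋₊ + 1
  have hJ : 2 * (K + 1) < J * δ := by
    rw [← div_lt_iff₀ hδ]
    exact_mod_cast Nat.lt_floor_add_one _
  set A := (J + 1) * ((K + 1 + J * δ + J) * variance (Z 0) μ / (ε / 2) ^ 2)
  have hdecay : ∀ᶠ s in atTop, A / s ≤ r :=
    (tendsto_const_nhds.div_atTop tendsto_id).eventually (ge_mem_nhds hr)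
  filter_upwards [eventually_ge_atTop 1, eventually_ge_atTop (4 * c / ε), hdecay]
    with s hs1 hsc hsr m
  have hs0 : 0 < s := by linarith
  have hcL : ⌈δ * s⌉₊ * c ≤ ε * s / 2 := by
    have hL : (⌈δ * s⌉₊ : ℝ) ≤ δ * s + 1 := (Nat.ceil_lt_add_one (by positivity)).le
    have : c ≤ ε * s / 4 := by
      rw [div_le_iff₀ hε] at hsc
      linarith
    nlinarith
  have hsub : {ω | ∃ n : ℕ, |(n : ℝ) - m| ≤ K * s ∧
        ε * s ≤ |centeredPartialSum Z c n ω - centeredPartialSum Z c m ω|} ⊆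
      {ω | ∃ n : ℕ, |(n : ℝ) - m| ≤ K * s ∧
        ε * s / 2 + ⌈δ * s⌉₊ * c ≤ |centeredPartialSum Z c n ω - centeredPartialSum Z c m ω|} :=
    fun ω ⟨n, hnm, hdev⟩ => ⟨n, hnm, by linarith⟩
  refine (measure_mono hsub).trans
    ((measure_exists_le_abs_centeredPartialSum_sub_le hind hident hZ hZnn hK hδ hs1
      (by positivity : 0 < ε * s / 2) hJ m).trans (ENNReal.ofReal_le_ofReal ?_))
  convert hsr using 1
  simp only [A]
  field_simp

lemma eventually_measure_abs_Ntilde_sub_gt_le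
    (hind : Pairwise fun i j => IndepFun (Z i) (Z j) μ)
    (hident : ∀ i, IdentDistrib (Z i) (Z 0) μ μ) (hZ : MemLp (Z 0) 2 μ)
    (hZnn : ∀ k ω, 0 ≤ Z k ω) (hθ : 0 < ∫ ω, Z 0 ω ∂μ) {K : ℝ} (hK : 0 < K) :
    ∀ᶠ t in atTop, μ {ω | (K + 1) * √t < |(Ntilde Z t ω : ℝ) - t / ∫ ω, Z 0 ω ∂μ|} ≤
      ENNReal.ofReal (4 * variance (Z 0) μ / (K ^ 2 * (∫ ω, Z 0 ω ∂μ) ^ 3)) := by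
  set θ := ∫ ω, Z 0 ω ∂μ
  set v := variance (Z 0) μ
  have hv : 0 ≤ v := variance_nonneg _ _
  filter_upwards [eventually_ge_atTop 1, eventually_mul_sqrt_add_le_div hθ K 1] with t ht1 htK
  set s := √t
  have hs1 : 1 ≤ s := Real.one_le_sqrt.2 ht1
  have hst : s ^ 2 = t := Real.sq_sqrt (by linarith)
  have h2t : 2 * t / θ = 2 * (t / θ) := mul_div_assoc _ _ _
  have hcheb : ∀ n : ℕ, (n : ℝ) ≤ 2 * t / θ →
      μ {ω | θ * (K * s) ≤ |centeredPartialSum Z θ n ω|} ≤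
        ENNReal.ofReal (2 * v / (K ^ 2 * θ ^ 3)) := by
    intro n hn
    have h := measure_le_abs_centeredPartialSum_sub_le hind hident hZ
      (η := θ * (K * s)) (by positivity) 0 n
    simp only [centeredPartialSum_zero, sub_zero, Nat.cast_zero, Nat.abs_cast] at h
    refine h.trans (ENNReal.ofReal_le_ofReal ?_)
    calc n * v / (θ * (K * s)) ^ 2 ≤ 2 * t / θ * v / (θ * (K * s)) ^ 2 := by gcongr
      _ = 2 * v / (K ^ 2 * θ ^ 3) := by
        rw [mul_pow, mul_pow, hst]
        field_simp
  have hsub : {ω | (K + 1) * s < |(Ntilde Z t ω : ℝ) - t / θ|} ⊆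
      {ω | θ * (K * s) ≤ |centeredPartialSum Z θ ⌊t / θ - K * s⌋₊ ω|} ∪
        {ω | θ * (K * s) ≤ |centeredPartialSum Z θ ⌈t / θ + K * s⌉₊ ω|} := by
    intro ω hω
    by_contra h
    simp only [Set.mem_union, Set.mem_ofPred_eq, not_or, not_le] at h hω
    have := abs_Ntilde_sub_div_lt (hZnn · ω) hθ (by positivity) (by linarith) h.1 h.2
    nlinarith
  have hn₁ : (⌊t / θ - K * s⌋₊ : ℝ) ≤ 2 * t / θ := by
    have := Nat.floor_le (show 0 ≤ t / θ - K * s by linarith)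
    nlinarith
  have hn₂ : (⌈t / θ + K * s⌉₊ : ℝ) ≤ 2 * t / θ := by
    have := Nat.ceil_lt_add_one (show 0 ≤ t / θ + K * s by positivity)
    linarith
  calc _ ≤ _ := (measure_mono hsub).trans (measure_union_le _ _)
    _ ≤ ENNReal.ofReal (2 * v / (K ^ 2 * θ ^ 3)) + ENNReal.ofReal (2 * v / (K ^ 2 * θ ^ 3)) :=
        add_le_add (hcheb _ hn₁) (hcheb _ hn₂)
    _ = ENNReal.ofReal (4 * v / (K ^ 2 * θ ^ 3)) := by
        rw [← ENNReal.ofReal_add (by positivity) (by positivity)]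
        ring_nf

lemma exists_eventually_measure_abs_Ntilde_sub_gt_le
    (hind : Pairwise fun i j => IndepFun (Z i) (Z j) μ)
    (hident : ∀ i, IdentDistrib (Z i) (Z 0) μ μ) (hZ : MemLp (Z 0) 2 μ)
    (hZnn : ∀ k ω, 0 ≤ Z k ω) (hθ : 0 < ∫ ω, Z 0 ω ∂μ) {r : ℝ} (hr : 0 < r) :
    ∃ K > 0, ∀ᶠ t in atTop,
      μ {ω | K * √t < |(Ntilde Z t ω : ℝ) - t / ∫ ω, Z 0 ω ∂μ|} ≤ ENNReal.ofReal r := by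
  have hlim : Tendsto (fun K : ℝ => 4 * variance (Z 0) μ / (K ^ 2 * (∫ ω, Z 0 ω ∂μ) ^ 3))
      atTop (nhds 0) :=
    tendsto_const_nhds.div_atTop ((tendsto_pow_atTop two_ne_zero).atTop_mul_const (by positivity))
  obtain ⟨K, hKr, hK⟩ := ((hlim.eventually (ge_mem_nhds hr)).and (eventually_gt_atTop 0)).exists
  exact ⟨K + 1, by positivity,
    (eventually_measure_abs_Ntilde_sub_gt_le hind hident hZ hZnn hθ hK).mono fun t ht =>
      ht.trans (ENNReal.ofReal_le_ofReal hKr)⟩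

end PairwiseIndependentIdenticallyDistributed

theorem renewal_fluctuation_negligible_general
    {Ω : Type*} [MeasurableSpace Ω] (μ : Measure Ω) [IsProbabilityMeasure μ]
    (X τ : ℕ → Ω → ℝ) (hiid : IsIIDPairs μ X τ)
    (hX2 : MemLp (X 0) 2 μ) (hτ2 : MemLp (τ 0) 2 μ)
    (Xbar τbar : ℝ)
    (hXbar : Xbar = ∫ ω, X 0 ω ∂μ) (hτbar : τbar = ∫ ω, τ 0 ω ∂μ)
    (hτbar0 : τbar ≠ 0)
    :
    ∀ ε : ℝ, 0 < ε →
      Filter.Tendsto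
        (fun t : ℝ => μ {ω | ε ≤
          |(1 / Real.sqrt t) *
            ((Upartial X (Ntilde τ t ω - 1) ω - Upartial X ⌊t / τbar⌋₊ ω) -
              Xbar * ((Ntilde τ t ω : ℝ) - (⌊t / τbar⌋₊ : ℝ)))|})
        Filter.atTop (nhds 0) := by
  have hXnn := hiid.2.2.1
  have hτnn := hiid.2.2.2.1
  subst hXbar hτbar
  have hX_mean : 0 ≤ ∫ ω, X 0 ω ∂μ := integral_nonneg (hXnn 0)
  have hτ_mean : 0 < ∫ ω, τ 0 ω ∂μ := (integral_nonneg (hτnn 0)).lt_of_ne' hτbar0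
  intro ε hε
  refine ENNReal.tendsto_nhds_zero_of_forall_ofReal fun r hr => ?_
  obtain ⟨K, hK, hfar⟩ := exists_eventually_measure_abs_Ntilde_sub_gt_le
    hiid.pairwise_indepFun_snd hiid.identDistrib_snd hτ2 hτnn hτ_mean (half_pos hr)
  have hosc := Real.tendsto_sqrt_atTop.eventually
    (eventually_measure_exists_le_abs_centeredPartialSum_sub_le hiid.pairwise_indepFun_fst
      hiid.identDistrib_fst hX2 hXnn (K := K + 2) (by positivity) (half_pos hε) (half_pos hr))
  filter_upwards [hfar, hosc, eventually_ge_atTop 1, eventually_mul_sqrt_add_le_div hτ_mean K 1,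
    Real.tendsto_sqrt_atTop.eventually_ge_atTop (2 * (∫ ω, X 0 ω ∂μ) / ε)]
    with t hfar hosc ht1 htK htX
  have hs : 1 ≤ √t := Real.one_le_sqrt.2 ht1
  have hXs : ∫ ω, X 0 ω ∂μ ≤ ε / 2 * √t := by
    rw [div_le_iff₀ hε] at htX
    linarith
  refine (measure_mono fun ω hω => ?_).trans ((measure_union_le _ _).trans
    ((add_le_add hfar (hosc ⌊t / ∫ ω, τ 0 ω ∂μ⌋₊)).trans_eq ?_))
  · by_cases hnear : |(Ntilde τ t ω : ℝ) - t / ∫ ω, τ 0 ω ∂μ| ≤ K * √t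
    · obtain ⟨hN1, hnm⟩ := one_le_and_abs_cast_sub_one_sub_floor_le hnear htK
      exact Or.inr ⟨_, hnm.trans (by nlinarith),
        le_abs_centeredPartialSum_sub_of_le_abs hX_mean (by positivity) hXs hN1 hω⟩
    · exact Or.inl (not_le.1 hnear)
  · rw [← ENNReal.ofReal_add (by positivity) (by positivity), add_halves]

/-- **Lemma 5.1.** `(1/√t) ((U_{Ñ(t)-1} - U_{[t/τ̄]}) - X̄ (Ñ(t) - [t/τ̄])) → 0`
in probability as `t → ∞`. -/
theorem renewal_fluctuation_negligible
    {Ω : Type*} [MeasurableSpace Ω] (μ : Measure Ω) [IsProbabilityMeasure μ]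
    (X τ : ℕ → Ω → ℝ) (hiid : IsIIDPairs μ X τ)
    (hX2 : MemLp (X 0) 2 μ) (hτ2 : MemLp (τ 0) 2 μ)
    (Xbar τbar σX στ σXτ : ℝ)
    (hXbar : Xbar = ∫ ω, X 0 ω ∂μ) (hτbar : τbar = ∫ ω, τ 0 ω ∂μ)
    (hXbar0 : Xbar ≠ 0) (hτbar0 : τbar ≠ 0)
    (hσX : σX = Real.sqrt (ProbabilityTheory.variance (X 0) μ))
    (hστ : στ = Real.sqrt (ProbabilityTheory.variance (τ 0) μ))
    (hσX0 : σX ≠ 0) (hστ0 : στ ≠ 0)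
    (hσXτ : σXτ = ∫ ω, (X 0 ω - Xbar) * (τ 0 ω - τbar) ∂μ)
    :
    ∀ ε : ℝ, 0 < ε →
      Filter.Tendsto
        (fun t : ℝ => μ {ω | ε ≤
          |(1 / Real.sqrt t) *
            ((Upartial X (Ntilde τ t ω - 1) ω - Upartial X ⌊t / τbar⌋₊ ω) -
              Xbar * ((Ntilde τ t ω : ℝ) - (⌊t / τbar⌋₊ : ℝ)))|})
        Filter.atTop (nhds 0) :=
  renewal_fluctuation_negligible_general μ X τ hiid hX2 hτ2 Xbar τbar hXbar hτbar hτbar0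
end
end
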